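/- Assume v_0 < ... < v_g satisfy the Bresinsky conditions. Then every integer z can be written uniquely as z = Σ_{i=0}^g s_i v_i with s_0 ∈ ℤ and 0 ≤ s_i < n_i for 1 ≤ i ≤ g; moreover z ∈ Γ if and only if s_0 ≥ 0 in this representation. -/
import Mathlib


/-- `e_i = gcd(v_0, …, v_i)`. -/
def eseq (v : ℕ → ℕ) : ℕ → ℕ
  | 0 => v 0
  | i + 1 => Nat.gcd (eseq v i) (v (i + 1))

/-- `n_0 = 1`, `n_i = e_{i-1}/e_i`. -/
def nseq (v : ℕ → ℕ) : ℕ → ℕ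
  | 0 => 1
  | i + 1 => eseq v i / eseq v (i + 1)

section AuxBresinsky

variable (v : ℕ → ℕ)

lemma epos (hpos : 0 < v 0) : ∀ i, 0 < eseq v i := by
  intro i
  induction i with
  | zero => exact hpos
  | succ k ih => exact Nat.gcd_pos_of_pos_left _ ih

lemma e_dvd_e (i : ℕ) : eseq v (i + 1) ∣ eseq v i := Nat.gcd_dvd_left _ _

lemma e_dvd_v : ∀ i j, j ≤ i → eseq v i ∣ v j := by
  intro i
  induction i with
  | zero => intro j hj; interval_cases j; exact dvd_refl _
  | succ k ih =>
    intro j hj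
    rcases Nat.lt_or_ge j (k + 1) with h | h
    · exact dvd_trans (e_dvd_e v k) (ih j (Nat.lt_succ_iff.mp h))
    · have : j = k + 1 := le_antisymm hj h
      subst this; exact Nat.gcd_dvd_right _ _

lemma e_mul (i : ℕ) : eseq v i = nseq v (i + 1) * eseq v (i + 1) := by
  show eseq v i = eseq v i / eseq v (i + 1) * eseq v (i + 1)
  exact (Nat.div_mul_cancel (e_dvd_e v i)).symm

lemma npos (hpos : 0 < v 0) : ∀ i, 0 < nseq v i := by
  intro i
  cases i with
  | zero => exact Nat.one_pos
  | succ k =>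
    show 0 < eseq v k / eseq v (k + 1)
    exact Nat.div_pos (Nat.le_of_dvd (epos v hpos k) (e_dvd_e v k)) (epos v hpos (k + 1))

lemma e_dvd_sum (k : ℕ) (s : ℕ → ℤ) :
    (eseq v k : ℤ) ∣ ∑ i ∈ Finset.range (k + 1), s i * (v i : ℤ) := by
  apply Finset.dvd_sum
  intro i hi
  exact Dvd.dvd.mul_left (Int.natCast_dvd_natCast.mpr
    (e_dvd_v v k i (Nat.lt_succ_iff.mp (Finset.mem_range.mp hi)))) _

lemma exist (hpos : 0 < v 0) :
    ∀ k, ∀ z : ℤ, (eseq v k : ℤ) ∣ z → ∃ s : ℕ → ℤ,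
      (∀ i, 1 ≤ i → i ≤ k → 0 ≤ s i ∧ s i < (nseq v i : ℤ)) ∧
      z = ∑ i ∈ Finset.range (k + 1), s i * (v i : ℤ) := by
  intro k
  induction k with
  | zero =>
    intro z hz
    have hz' : ((v 0 : ℕ) : ℤ) ∣ z := hz
    refine ⟨fun _ => z / (v 0 : ℤ), fun i h1 h0 => absurd (h1.trans h0) (by norm_num), ?_⟩
    simp only [zero_add, Finset.sum_range_one]
    exact (Int.ediv_mul_cancel hz').symm
  | succ k ih =>
    intro z hz
    obtain ⟨m, hm⟩ := hz
    set A := Nat.gcdA (eseq v k) (v (k + 1)) with hA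
    set B := Nat.gcdB (eseq v k) (v (k + 1)) with hB
    have hAB : (eseq v (k + 1) : ℤ) = (eseq v k : ℤ) * A + (v (k + 1) : ℤ) * B :=
      Nat.gcd_eq_gcd_ab _ _
    set n : ℤ := (nseq v (k + 1) : ℤ) with hn
    have hnpos : 0 < n := by rw [hn]; exact_mod_cast npos v hpos (k + 1)
    set r : ℤ := (m * B) % n with hr
    have hr0 : 0 ≤ r := Int.emod_nonneg _ (ne_of_gt hnpos)
    have hrn : r < n := Int.emod_lt_of_pos _ hnpos
    have hsub : m * B - r = n * (m * B / n) := by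
      rw [hr, Int.emod_def]; ring
    have hnv : (eseq v k : ℤ) ∣ n * (v (k + 1) : ℤ) := by
      have h1 : (eseq v k : ℤ) = n * (eseq v (k + 1) : ℤ) := by
        rw [hn]; exact_mod_cast congrArg (Nat.cast : ℕ → ℤ) (e_mul v k)
      have h2 : (eseq v (k + 1) : ℤ) ∣ (v (k + 1) : ℤ) :=
        Int.natCast_dvd_natCast.mpr (e_dvd_v v (k + 1) (k + 1) le_rfl)
      rw [h1]; exact mul_dvd_mul_left n h2
    have hw : (eseq v k : ℤ) ∣ z - r * (v (k + 1) : ℤ) := by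
      have : z - r * (v (k + 1) : ℤ)
          = (eseq v k : ℤ) * (m * A) + (m * B / n) * (n * (v (k + 1) : ℤ)) := by
        rw [hm, hAB]; linear_combination (v (k + 1) : ℤ) * hsub
      rw [this]
      exact dvd_add (Dvd.intro _ rfl) (Dvd.dvd.mul_left hnv _)
    obtain ⟨s', hs'b, hs's⟩ := ih _ hw
    refine ⟨fun i => if i = k + 1 then r else s' i, ?_, ?_⟩
    · intro i h1 hik
      by_cases h : i = k + 1
      · simp only [h, if_pos rfl]; exact ⟨hr0, hrn⟩
      · simp only [if_neg h]
        exact hs'b i h1 (Nat.lt_succ_iff.mp (lt_of_le_of_ne hik h))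
    · have hcong : ∑ i ∈ Finset.range (k + 1), (if i = k + 1 then r else s' i) * (v i : ℤ)
          = ∑ i ∈ Finset.range (k + 1), s' i * (v i : ℤ) :=
        Finset.sum_congr rfl (fun i hi => by
          rw [if_neg]; have := Finset.mem_range.mp hi; omega)
      rw [Finset.sum_range_succ, hcong]
      beta_reduce
      rw [if_pos rfl, ← hs's]; ring

lemma uniq0 (hpos : 0 < v 0) :
    ∀ k, ∀ d : ℕ → ℤ, (∀ i, 1 ≤ i → i ≤ k → |d i| < (nseq v i : ℤ)) →
      ∑ i ∈ Finset.range (k + 1), d i * (v i : ℤ) = 0 → ∀ i, i ≤ k → d i = 0 := by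
  intro k
  induction k with
  | zero =>
    intro d _ hsum i hi
    interval_cases i
    simp only [zero_add, Finset.sum_range_one] at hsum
    have hv : (v 0 : ℤ) ≠ 0 := by exact_mod_cast hpos.ne'
    exact (mul_eq_zero.mp hsum).resolve_right hv
  | succ k ih =>
    intro d hb hsum
    -- first show d (k+1) = 0
    have hdvd : (eseq v k : ℤ) ∣ d (k + 1) * (v (k + 1) : ℤ) := by
      have h1 : (eseq v k : ℤ) ∣ ∑ i ∈ Finset.range (k + 1), d i * (v i : ℤ) :=
        e_dvd_sum v k d
      have h2 : ∑ i ∈ Finset.range (k + 1), d i * (v i : ℤ)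
          = -(d (k + 1) * (v (k + 1) : ℤ)) := by
        rw [Finset.sum_range_succ] at hsum; linarith
      rw [h2] at h1
      exact (dvd_neg).mp h1
    set n := nseq v (k + 1) with hn
    set e := eseq v (k + 1) with he
    obtain ⟨w, hw⟩ : e ∣ v (k + 1) := e_dvd_v v (k + 1) (k + 1) le_rfl
    have hek : eseq v k = n * e := e_mul v k
    have hepos : (0:ℤ) < (e : ℤ) := by exact_mod_cast epos v hpos (k + 1)
    have hco : Nat.Coprime n w := by
      have h0 : 0 < Nat.gcd (eseq v k) (v (k + 1)) := epos v hpos (k + 1)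
      have := Nat.coprime_div_gcd_div_gcd (m := eseq v k) (n := v (k + 1)) h0
      have hg : Nat.gcd (eseq v k) (v (k + 1)) = e := rfl
      rw [hg] at this
      have hw' : v (k + 1) / e = w := by rw [hw]; exact Nat.mul_div_cancel_left _ (by exact_mod_cast hepos)
      have hn' : eseq v k / e = n := by rw [hek]; exact Nat.mul_div_cancel _ (by exact_mod_cast hepos)
      rwa [hw', hn'] at this
    have hndvd : (n : ℤ) ∣ d (k + 1) := by
      have h3 : ((n : ℤ) * e) ∣ (d (k + 1) * w) * e := by
        have : (d (k + 1) * w) * (e:ℤ) = d (k + 1) * (v (k + 1) : ℤ) := by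
          rw [hw]; push_cast; ring
        rw [this]
        have : ((n:ℤ) * e) = (eseq v k : ℤ) := by rw [hek]; push_cast; ring
        rw [this]; exact hdvd
      have h4 : (n : ℤ) ∣ d (k + 1) * w := by
        exact (mul_dvd_mul_iff_right hepos.ne').mp h3
      have h5 : Int.gcd (n : ℤ) (w : ℤ) = 1 := by
        rw [Int.gcd_natCast_natCast]; exact hco
      rw [mul_comm] at h4
      exact Int.dvd_of_dvd_mul_right_of_gcd_one h4 h5
    have hd0 : d (k + 1) = 0 := by
      by_contra hne
      have habs : (n : ℤ) ≤ |d (k + 1)| :=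
        Int.le_of_dvd (abs_pos.mpr hne) ((dvd_abs _ _).mpr hndvd)
      have := hb (k + 1) (by omega) le_rfl
      omega
    have hsum' : ∑ i ∈ Finset.range (k + 1), d i * (v i : ℤ) = 0 := by
      rw [Finset.sum_range_succ, hd0] at hsum; linarith
    intro i hi
    rcases Nat.lt_or_ge i (k + 1) with h | h
    · exact ih d (fun j h1 hj => hb j h1 (by omega)) hsum' i (by omega)
    · have : i = k + 1 := le_antisymm hi h
      rw [this]; exact hd0

lemma e_dvd_nv (hpos : 0 < v 0) (k : ℕ) :
    (eseq v k : ℤ) ∣ (nseq v (k + 1) : ℤ) * (v (k + 1) : ℤ) := by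
  have h1 : (eseq v k : ℤ) = (nseq v (k + 1) : ℤ) * (eseq v (k + 1) : ℤ) := by
    exact_mod_cast congrArg (Nat.cast : ℕ → ℤ) (e_mul v k)
  have h2 : (eseq v (k + 1) : ℤ) ∣ (v (k + 1) : ℤ) :=
    Int.natCast_dvd_natCast.mpr (e_dvd_v v (k + 1) (k + 1) le_rfl)
  rw [h1]; exact mul_dvd_mul_left _ h2

lemma bound (g : ℕ) (hpos : 0 < v 0)
    (hmono : ∀ i j, i < j → j ≤ g → v i < v j)
    (hbre : ∀ i, 1 ≤ i → i ≤ g → 2 ≤ nseq v i ∧ nseq v (i - 1) * v (i - 1) < v i) :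
    ∀ k, k + 1 ≤ g →
      ∑ i ∈ Finset.range (k + 1), ((nseq v i : ℤ) - 1) * (v i : ℤ) < (v (k + 1) : ℤ) := by
  intro k
  induction k with
  | zero =>
    intro h
    have h1 : nseq v 0 = 1 := rfl
    simp only [zero_add, Finset.sum_range_one, h1]
    have h2 := hmono 0 1 one_pos h
    have : (0:ℤ) < (v 1 : ℤ) := by exact_mod_cast lt_trans hpos h2
    push_cast
    linarith
  | succ k ih =>
    intro h
    have hk : k + 1 ≤ g := by omega
    have h2 := (hbre (k + 2) (by omega) h).2
    have hred : (k + 2) - 1 = k + 1 := rfl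
    rw [hred] at h2
    have h2' : (nseq v (k + 1) : ℤ) * (v (k + 1) : ℤ) < (v (k + 2) : ℤ) := by
      exact_mod_cast h2
    have h3 := ih hk
    rw [Finset.sum_range_succ]
    nlinarith [h3, h2']

lemma pos_of_nonneg (g : ℕ) (hpos : 0 < v 0)
    (hmono : ∀ i j, i < j → j ≤ g → v i < v j)
    (hbre : ∀ i, 1 ≤ i → i ≤ g → 2 ≤ nseq v i ∧ nseq v (i - 1) * v (i - 1) < v i) :
    ∀ k, k ≤ g → ∀ z : ℤ, ∀ c : ℕ → ℤ, (∀ i, i ≤ k → 0 ≤ c i) →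
      z = ∑ i ∈ Finset.range (k + 1), c i * (v i : ℤ) →
      ∀ s : ℕ → ℤ, (∀ i, 1 ≤ i → i ≤ k → 0 ≤ s i ∧ s i < (nseq v i : ℤ)) →
      z = ∑ i ∈ Finset.range (k + 1), s i * (v i : ℤ) → 0 ≤ s 0 := by
  intro k
  induction k with
  | zero =>
    intro _ z c hc hzc s _ hzs
    simp only [zero_add, Finset.sum_range_one] at hzc hzs
    have hv : (0:ℤ) < (v 0 : ℤ) := by exact_mod_cast hpos
    nlinarith [hc 0 le_rfl]
  | succ k ih =>
    intro hkg z c hc hzc s hs hzs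
    set n : ℤ := (nseq v (k + 1) : ℤ) with hn
    have hnpos : 0 < n := by rw [hn]; exact_mod_cast npos v hpos (k + 1)
    have hvk : (0:ℤ) < (v (k + 1) : ℤ) := by
      have := hmono 0 (k + 1) (by omega) hkg
      exact_mod_cast lt_trans hpos this
    -- canonical rep t of n * v (k+1) at level k, with t 0 ≥ 0
    obtain ⟨t, htb, hts⟩ := exist v hpos k (n * (v (k + 1) : ℤ)) (e_dvd_nv v hpos k)
    have hB := bound v g hpos hmono hbre k hkg
    have hBsplit := Finset.sum_range_succ' (fun i => ((nseq v i : ℤ) - 1) * (v i : ℤ)) k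
    have hB' : ∑ i ∈ Finset.range k, ((nseq v (i + 1) : ℤ) - 1) * (v (i + 1) : ℤ)
        < (v (k + 1) : ℤ) := by
      have h0 : ((nseq v 0 : ℤ) - 1) * (v 0 : ℤ) = 0 := by
        have : nseq v 0 = 1 := rfl
        rw [this]; push_cast; ring
      rw [hBsplit] at hB
      simpa [h0] using hB
    have hsplit := Finset.sum_range_succ' (fun i => t i * (v i : ℤ)) k
    rw [hsplit] at hts
    have hle : ∑ i ∈ Finset.range k, t (i + 1) * (v (i + 1) : ℤ)
        ≤ ∑ i ∈ Finset.range k, ((nseq v (i + 1) : ℤ) - 1) * (v (i + 1) : ℤ) := by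
      apply Finset.sum_le_sum
      intro i hi
      have hi' := Finset.mem_range.mp hi
      have hb := htb (i + 1) (by omega) (by omega)
      have hvp : (0:ℤ) ≤ (v (i + 1) : ℤ) := by positivity
      have : t (i + 1) ≤ (nseq v (i + 1) : ℤ) - 1 := by omega
      exact mul_le_mul_of_nonneg_right this hvp
    have hvle : (v (k + 1) : ℤ) ≤ n * (v (k + 1) : ℤ) :=
      le_mul_of_one_le_left hvk.le hnpos
    have htv : 0 < t 0 * (v 0 : ℤ) := by linarith
    have ht0 : 0 ≤ t 0 := by
      rcases mul_pos_iff.mp htv with ⟨h, _⟩ | ⟨_, h⟩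
      · exact h.le
      · exfalso; have : (0:ℤ) < (v 0 : ℤ) := by exact_mod_cast hpos
        linarith
    -- split z = w + r * v(k+1) with w a nonneg combination at level k
    set q : ℤ := c (k + 1) / n with hq
    set r : ℤ := c (k + 1) % n with hr
    have hq0 : 0 ≤ q := Int.ediv_nonneg (hc (k + 1) le_rfl) hnpos.le
    have hr0 : 0 ≤ r := Int.emod_nonneg _ hnpos.ne'
    have hrn : r < n := Int.emod_lt_of_pos _ hnpos
    have hqr : n * q + r = c (k + 1) := Int.mul_ediv_add_emod _ _
    set c' : ℕ → ℤ := fun i => c i + q * t i with hc'def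
    have hc' : ∀ i, i ≤ k → 0 ≤ c' i := by
      intro i hik
      have h1 : 0 ≤ c i := hc i (by omega)
      have h2 : 0 ≤ t i := by
        rcases Nat.eq_zero_or_pos i with h | h
        · rw [h]; exact ht0
        · exact (htb i h hik).1
      have : 0 ≤ q * t i := mul_nonneg hq0 h2
      simp only [hc'def]; linarith
    have hwsum : z - r * (v (k + 1) : ℤ) = ∑ i ∈ Finset.range (k + 1), c' i * (v i : ℤ) := by
      have h1 : ∑ i ∈ Finset.range (k + 1), c' i * (v i : ℤ)
          = ∑ i ∈ Finset.range (k + 1), c i * (v i : ℤ)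
            + q * ∑ i ∈ Finset.range (k + 1), t i * (v i : ℤ) := by
        rw [Finset.mul_sum, ← Finset.sum_add_distrib]
        apply Finset.sum_congr rfl
        intro i _
        simp only [hc'def]; ring
      have hts' : ∑ i ∈ Finset.range (k + 1), t i * (v i : ℤ) = n * (v (k + 1) : ℤ) :=
        hsplit.trans hts.symm
      rw [Finset.sum_range_succ] at hzc
      rw [h1, hts', hzc]
      linear_combination (-(v (k + 1) : ℤ)) * hqr
    have hwdvd : (eseq v k : ℤ) ∣ z - r * (v (k + 1) : ℤ) := by
      rw [hwsum]; exact e_dvd_sum v k c'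
    obtain ⟨p, hpb, hps⟩ := exist v hpos k _ hwdvd
    set P : ℕ → ℤ := fun i => if i = k + 1 then r else p i with hP
    have hPs : z = ∑ i ∈ Finset.range (k + 2), P i * (v i : ℤ) := by
      have hcong : ∑ i ∈ Finset.range (k + 1), P i * (v i : ℤ)
          = ∑ i ∈ Finset.range (k + 1), p i * (v i : ℤ) :=
        Finset.sum_congr rfl (fun i hi => by
          simp only [hP]
          rw [if_neg]; have := Finset.mem_range.mp hi; omega)
      rw [Finset.sum_range_succ, hcong, ← hps]
      simp only [hP, if_pos rfl]
      ring
    -- uniqueness at level k+1 : s = P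
    have hd : ∀ i, i ≤ k + 1 → s i - P i = 0 := by
      apply uniq0 v hpos (k + 1) (fun i => s i - P i)
      · intro i h1 hik
        have hsi := hs i h1 hik
        by_cases h : i = k + 1
        · simp only [hP, h, if_pos rfl]
          rw [h] at hsi
          rw [abs_lt]; constructor <;> [linarith; linarith]
        · simp only [hP, if_neg h]
          have hpi := hpb i h1 (by omega)
          rw [abs_lt]; constructor <;> [linarith; linarith]
      · have hsub : ∑ i ∈ Finset.range (k + 1 + 1), (s i - P i) * (v i : ℤ)
            = ∑ i ∈ Finset.range (k + 1 + 1), s i * (v i : ℤ)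
              - ∑ i ∈ Finset.range (k + 1 + 1), P i * (v i : ℤ) := by
          rw [← Finset.sum_sub_distrib]
          apply Finset.sum_congr rfl
          intro i _
          ring
        rw [hsub, ← hzs, ← hPs]
        ring
    have hs0 : s 0 = p 0 := by
      have := hd 0 (by omega)
      have hP0 : P 0 = p 0 := by simp only [hP]; rw [if_neg]; omega
      linarith [this, hP0]
    rw [hs0]
    exact ih (by omega) _ c' hc' hwsum p hpb hps

end AuxBresinsky

/-- The numerical semigroup generated by `v_0, …, v_g`, regarded inside `ℤ`. -/
def semigroupGenZ (g : ℕ) (v : ℕ → ℕ) : Set ℤ :=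
  {z | ∃ c : ℕ → ℕ, z = ∑ i ∈ Finset.range (g + 1), (c i : ℤ) * (v i : ℤ)}

/-- For `v_0 < ⋯ < v_g` positive with `gcd = 1` satisfying the Bresinsky
conditions: every integer `z` can be written uniquely as `z = Σ_{i=0}^g s_i v_i`
with `s_0 ∈ ℤ` and `0 ≤ s_i < n_i` for `1 ≤ i ≤ g`; moreover `z ∈ Γ` iff
`s_0 ≥ 0` in this representation. -/
theorem unique_representation (g : ℕ) (v : ℕ → ℕ) (hpos : 0 < v 0)
    (hmono : ∀ i j, i < j → j ≤ g → v i < v j) (hgcd : eseq v g = 1)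
    (hbre : ∀ i, 1 ≤ i → i ≤ g → 2 ≤ nseq v i ∧ nseq v (i - 1) * v (i - 1) < v i) :
    ∀ z : ℤ,
      (∃! s : Fin (g + 1) → ℤ,
        (∀ i : Fin (g + 1), 1 ≤ (i : ℕ) → 0 ≤ s i ∧ s i < (nseq v (i : ℕ) : ℤ)) ∧
          z = ∑ i : Fin (g + 1), s i * (v (i : ℕ) : ℤ)) ∧
      ∀ s : Fin (g + 1) → ℤ,
        (∀ i : Fin (g + 1), 1 ≤ (i : ℕ) → 0 ≤ s i ∧ s i < (nseq v (i : ℕ) : ℤ)) →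
        z = ∑ i : Fin (g + 1), s i * (v (i : ℕ) : ℤ) →
        (z ∈ semigroupGenZ g v ↔ 0 ≤ s 0) := by
  intro z
  have h0g : (0:ℕ) < g + 1 := Nat.succ_pos g
  have hfin0 : (⟨0, h0g⟩ : Fin (g + 1)) = 0 := by ext; simp
  -- conversion between Fin-indexed and ℕ-indexed data
  have key : ∀ t : Fin (g + 1) → ℤ,
      ∑ i : Fin (g + 1), t i * (v (i : ℕ) : ℤ)
        = ∑ i ∈ Finset.range (g + 1),
            (fun j => if h : j < g + 1 then t ⟨j, h⟩ else 0) i * (v i : ℤ) := by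
    intro t
    rw [← Fin.sum_univ_eq_sum_range
      (fun j => (if h : j < g + 1 then t ⟨j, h⟩ else 0) * (v j : ℤ)) (g + 1)]
    apply Finset.sum_congr rfl
    intro i _
    rw [dif_pos i.isLt]
  have hdvd : (eseq v g : ℤ) ∣ z := by rw [hgcd]; exact one_dvd z
  obtain ⟨s, hsb, hss⟩ := exist v hpos g z hdvd
  constructor
  · refine ⟨fun i => s i.1, ⟨?_, ?_⟩, ?_⟩
    · intro i h1
      exact hsb i.1 h1 (Nat.lt_succ_iff.mp i.isLt)
    · rw [hss]
      exact (Fin.sum_univ_eq_sum_range (fun j => s j * (v j : ℤ)) (g + 1)).symm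
    · rintro t ⟨htb, hts⟩
      set t' : ℕ → ℤ := fun j => if h : j < g + 1 then t ⟨j, h⟩ else 0 with ht'
      have hts' : z = ∑ j ∈ Finset.range (g + 1), t' j * (v j : ℤ) := by
        rw [hts, key t]
      have hzero : ∀ j, j ≤ g → t' j - s j = 0 := by
        apply uniq0 v hpos g (fun j => t' j - s j)
        · intro j h1 hj
          have h1' : j < g + 1 := by omega
          have hb1 := htb ⟨j, h1'⟩ h1
          have hb2 := hsb j h1 hj
          simp only [ht', dif_pos h1']
          rw [abs_lt]
          constructor <;> linarith [hb1.1, hb1.2, hb2.1, hb2.2]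
        · have hsub : ∑ j ∈ Finset.range (g + 1), (t' j - s j) * (v j : ℤ)
              = ∑ j ∈ Finset.range (g + 1), t' j * (v j : ℤ)
                - ∑ j ∈ Finset.range (g + 1), s j * (v j : ℤ) := by
            rw [← Finset.sum_sub_distrib]
            apply Finset.sum_congr rfl
            intro i _
            ring
          rw [hsub, ← hts', ← hss]
          ring
      funext i
      have hi : i.1 ≤ g := Nat.lt_succ_iff.mp i.isLt
      have h := hzero i.1 hi
      simp only [ht', dif_pos i.isLt, Fin.eta] at h
      linarith
  · intro t htb hts
    set t' : ℕ → ℤ := fun j => if h : j < g + 1 then t ⟨j, h⟩ else 0 with ht'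
    have ht'0 : t' 0 = t 0 := by
      simp only [ht', dif_pos h0g, hfin0]
    have htb' : ∀ i, 1 ≤ i → i ≤ g → 0 ≤ t' i ∧ t' i < (nseq v i : ℤ) := by
      intro i h1 hi
      have h' : i < g + 1 := by omega
      simp only [ht', dif_pos h']
      exact htb ⟨i, h'⟩ h1
    have hts' : z = ∑ j ∈ Finset.range (g + 1), t' j * (v j : ℤ) := by
      rw [hts, key t]
    constructor
    · rintro ⟨c, hc⟩
      have hp := pos_of_nonneg v g hpos hmono hbre g le_rfl z (fun i => (c i : ℤ))
        (fun i _ => Int.natCast_nonneg _) hc t' htb' hts'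
      rw [ht'0] at hp
      exact hp
    · intro h0
      refine ⟨fun i => (t' i).toNat, ?_⟩
      rw [hts']
      apply Finset.sum_congr rfl
      intro i hi
      have hi' := Finset.mem_range.mp hi
      have hnn : 0 ≤ t' i := by
        rcases Nat.eq_zero_or_pos i with h | h
        · subst h; rw [ht'0]; exact h0
        · exact (htb' i h (by omega)).1
      rw [Int.toNat_of_nonneg hnn]
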